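/- arXiv:1710.04233 — 2 statements merged into one kernel-verified Lean document; each statement's English description precedes it below -/
import Mathlib

section
/- Let (X,d) be a metric space and let M be a positive integer such that for every x ∈ X and every r > 0, any subset of the closed ball B^cl(x,r) whose distinct points are at pairwise distance strictly greater than r has cardinality at most M. Let μ be a Borel measure on X that is finite on every bounded Borel set and positive on every nonempty open set. Then for every s > 0 and almost every y ∈ X, the conjugate function satisfies a_s(y) ≤ M. -/
open MeasureTheory Metric ENNReal Function Finset

/-!
Write `a x = p (closedBall x s)` for the normalized restriction `p` of `μ` to `closedBall y s`.
Then `a⁻¹ = ∑ₖ (1 - a)ᵏ`, and `∫ (1 - a)ⁱ dp` is the probability that, for i.i.d. samples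
`ω₀, ω₁, …` of `p`, the sample `ωᵢ` is at distance `> s` from all earlier ones. The indices where
this happens give an `s`-separated subset of `closedBall y s`, so at most `M` of them occur, and
summing over `i` gives `∫ a⁻¹ dp ≤ M`. Finally `∫ a⁻¹ dp` is invariant under rescaling `p`, and
dominates `a_s(y)` because `μ (closedBall x s) ≥ μ (closedBall x s ∩ closedBall y s)`; so the
bound holds for every `y`.
-/

/-- The conjugate function `a_s(y) = ∫_X 1_{B^cl(y,s)}(x) / μ(B^cl(x,s)) dμ(x)`. -/
noncomputable def conjFn {X : Type*} [MetricSpace X] [MeasurableSpace X]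
    (μ : Measure X) (s : ℝ) (y : X) : ℝ≥0∞ :=
  ∫⁻ x in closedBall y s, (μ (closedBall x s))⁻¹ ∂μ

theorem sigmaFinite_of_isBounded_lt_top {X : Type*} [PseudoMetricSpace X] [MeasurableSpace X]
    [Nonempty X] (μ : Measure X) (hfin : ∀ s : Set X, Bornology.IsBounded s → μ s < ⊤) :
    SigmaFinite μ := by
  obtain ⟨x⟩ := ‹Nonempty X›
  refine Measure.sigmaFinite_of_countable (Set.countable_range fun n : ℕ => closedBall x n)
    (by rintro _ ⟨n, rfl⟩; exact hfin _ isBounded_closedBall) ?_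
  rw [Set.sUnion_range, iUnion_closedBall_nat]

theorem Metric.secondCountableTopology_of_isOpenPosMeasure {X : Type*} [PseudoMetricSpace X]
    [MeasurableSpace X] [OpensMeasurableSpace X] (μ : Measure X) [SFinite μ]
    [μ.IsOpenPosMeasure] : SecondCountableTopology X := by
  refine secondCountable_of_almost_dense_set fun ε hε => ?_
  lift ε to NNReal using hε.le
  obtain ⟨T, hT⟩ := zorn_subset {N : Set X | IsSeparated ε N} fun c hc hchain =>
    ⟨⋃₀ c, hchain.pairwise_sUnion.2 hc, fun _ => Set.subset_sUnion_of_mem⟩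
  have hcover : IsCover ε Set.univ T := .of_maximal_isSeparated (by simpa using hT)
  refine ⟨T, ?_, fun x => ?_⟩
  · have hdisj : Pairwise (Disjoint on fun z : T => ball (z : X) (ε / 2)) := fun z w hzw =>
      ball_disjoint_ball <| by
        have : (ε : ℝ≥0∞) < edist (z : X) w := hT.prop z.2 w.2 (Subtype.coe_ne_coe.2 hzw)
        rw [← not_le, edist_le_coe, not_le, ← NNReal.coe_lt_coe, coe_nndist] at this
        linarith
    have := Measure.countable_meas_pos_of_disjoint_iUnion (μ := μ)
      (fun _ => measurableSet_ball) hdisj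
    simp only [measure_ball_pos μ _ (half_pos hε), Set.ofPred_true] at this
    exact Set.countable_univ_iff.1 this
  · obtain ⟨y, hy, hxy⟩ := hcover (Set.mem_univ x)
    exact ⟨y, hy, by simpa [edist_dist] using hxy⟩

theorem measure_pi_setOf_forall_lt_mem {X : Type*} [MeasurableSpace X] (p : Measure X)
    [IsProbabilityMeasure p] {E : Set (X × X)} (hE : MeasurableSet E) {n : ℕ} (i : Fin (n + 1)) :
    Measure.pi (fun _ => p) {ω | ∀ j < i, (ω j, ω i) ∈ E} =
      ∫⁻ v, p {u | (u, v) ∈ E} ^ (i : ℕ) ∂p := by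
  set F : Set (X × (Fin n → X)) := {z | ∀ j : Fin n, (j : ℕ) < i → (z.2 j, z.1) ∈ E}
  have hF : MeasurableSet F := by
    simp only [F, Set.ofPred_forall]
    exact .iInter fun j => .iInter fun _ => hE.preimage (by fun_prop)
  have hpre : {ω : Fin (n + 1) → X | ∀ j < i, (ω j, ω i) ∈ E} =
      MeasurableEquiv.piFinSuccAbove (fun _ => X) i ⁻¹' F := by
    ext ω
    simp only [F, Set.mem_ofPred_eq, Set.mem_preimage, MeasurableEquiv.piFinSuccAbove_apply,
      Fin.insertNthEquiv_symm_apply, Fin.removeNth]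
    constructor
    · intro h k hk
      exact h _ ((Fin.succAbove_lt_iff_castSucc_lt _ _).2 (Fin.lt_def.2 hk))
    · intro h j hj
      obtain ⟨k, rfl⟩ := Fin.exists_succAbove_eq hj.ne
      exact h k (Fin.lt_def.1 ((Fin.succAbove_lt_iff_castSucc_lt _ _).1 hj))
  have hsection (v : X) : Prod.mk v ⁻¹' F =
      Set.pi Set.univ fun j : Fin n => if (j : ℕ) < i then {u | (u, v) ∈ E} else Set.univ := by
    ext ω
    simp only [F, Set.mem_preimage, Set.mem_ofPred_eq, Set.mem_pi, Set.mem_univ, true_implies]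
    refine forall_congr' fun j => ?_
    split_ifs with h <;> simp [h]
  rw [hpre, (measurePreserving_piFinSuccAbove (fun _ => p) i).measure_preimage
    hF.nullMeasurableSet, Measure.prod_apply hF]
  refine lintegral_congr fun v => ?_
  rw [hsection, Measure.pi_pi]
  simp only [apply_ite p, measure_univ]
  rw [Finset.prod_ite, Finset.prod_const, Finset.prod_const_one, mul_one, Fin.card_filter_val_lt,
    min_eq_right i.is_le]

theorem card_filter_forall_lt_dist_le {X : Type*} [MetricSpace X] {K : Set X} {s : ℝ}
    (hs : 0 ≤ s) {M : ℕ}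
    (hK : ∀ t : Finset X, (↑t : Set X) ⊆ K → (∀ a ∈ t, ∀ b ∈ t, a ≠ b → s < dist a b) →
      t.card ≤ M)
    {n : ℕ} (ω : Fin n → X) (hω : ∀ i, ω i ∈ K) :
    #{i | ∀ j < i, s < dist (ω j) (ω i)} ≤ M := by
  classical
  set I : Finset (Fin n) := {i | ∀ j < i, s < dist (ω j) (ω i)}
  have hfar : ∀ i ∈ I, ∀ j ∈ I, i ≠ j → s < dist (ω i) (ω j) := by
    intro i hi j hj hij
    rcases hij.lt_or_gt with h | h
    · exact (mem_filter.1 hj).2 i h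
    · rw [dist_comm]
      exact (mem_filter.1 hi).2 j h
  have hinj : Set.InjOn ω I := fun i hi j hj hij => by
    by_contra hne
    have := hfar i hi j hj hne
    rw [hij, dist_self] at this
    linarith
  rw [← card_image_of_injOn hinj]
  refine hK _ (by simpa [Set.subset_def] using fun i _ => hω i) ?_
  simp only [mem_image]
  rintro _ ⟨i, hi, rfl⟩ _ ⟨j, hj, rfl⟩ hne
  exact hfar i hi j hj (ne_of_apply_ne ω hne)

theorem sum_measure_pi_forall_lt_dist_le {X : Type*} [MetricSpace X] [MeasurableSpace X]
    [OpensMeasurableSpace X] [SecondCountableTopology X] (p : Measure X) [IsProbabilityMeasure p]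
    {K : Set X} (hpK : ∀ᵐ x ∂p, x ∈ K) {s : ℝ} (hs : 0 ≤ s) {M : ℕ}
    (hK : ∀ t : Finset X, (↑t : Set X) ⊆ K → (∀ a ∈ t, ∀ b ∈ t, a ≠ b → s < dist a b) →
      t.card ≤ M)
    (n : ℕ) :
    ∑ i : Fin n, Measure.pi (fun _ => p) {ω | ∀ j < i, s < dist (ω j) (ω i)} ≤ M := by
  set A : Fin n → Set (Fin n → X) := fun i => {ω | ∀ j < i, s < dist (ω j) (ω i)}
  have hA (i : Fin n) : MeasurableSet (A i) := by
    simp only [A, Set.ofPred_forall]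
    exact .iInter fun j => .iInter fun _ => measurableSet_lt measurable_const (by fun_prop)
  have hae : ∀ᵐ ω ∂Measure.pi (fun _ : Fin n => p), ∀ i, ω i ∈ K :=
    ae_all_iff.2 fun i => (measurePreserving_eval (fun _ => p) i).quasiMeasurePreserving.ae hpK
  calc ∑ i, Measure.pi (fun _ => p) (A i)
      = ∫⁻ ω, ∑ i, (A i).indicator 1 ω ∂Measure.pi (fun _ => p) := by
        rw [lintegral_finsetSum _ fun i _ => measurable_one.indicator (hA i)]
        simp only [lintegral_indicator_one (hA _)]
    _ ≤ ∫⁻ _, (M : ℝ≥0∞) ∂Measure.pi (fun _ => p) := by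
        refine lintegral_mono_ae (hae.mono fun ω hω => ?_)
        simp only [Set.indicator_apply, Pi.one_apply, sum_boole]
        exact_mod_cast card_filter_forall_lt_dist_le hs hK ω hω
    _ = M := by simp

theorem lintegral_inv_measure_closedBall_le_of_isProbabilityMeasure {X : Type*} [MetricSpace X]
    [MeasurableSpace X] [OpensMeasurableSpace X] [SecondCountableTopology X] (p : Measure X)
    [IsProbabilityMeasure p] {K : Set X} (hpK : ∀ᵐ x ∂p, x ∈ K) {s : ℝ} (hs : 0 ≤ s) {M : ℕ}
    (hK : ∀ t : Finset X, (↑t : Set X) ⊆ K → (∀ a ∈ t, ∀ b ∈ t, a ≠ b → s < dist a b) →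
      t.card ≤ M) :
    ∫⁻ x, (p (closedBall x s))⁻¹ ∂p ≤ M := by
  set E : Set (X × X) := {z | s < dist z.1 z.2}
  have hE : MeasurableSet E := measurableSet_lt measurable_const measurable_dist
  set b : X → ℝ≥0∞ := fun v => p {u | (u, v) ∈ E}
  have hball (v : X) : p (closedBall v s) = 1 - b v := by
    have : closedBall v s = {u | (u, v) ∈ E}ᶜ := by
      ext u
      simp [E]
    exact this ▸ prob_compl_eq_one_sub (hE.preimage measurable_prodMk_right)
  have hsample (n : ℕ) : ∑ i : Fin n, ∫⁻ v, b v ^ (i : ℕ) ∂p ≤ M := by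
    rcases n with _ | n
    · simp
    calc ∑ i : Fin (n + 1), ∫⁻ v, b v ^ (i : ℕ) ∂p
        = ∑ i : Fin (n + 1), Measure.pi (fun _ => p) {ω | ∀ j < i, (ω j, ω i) ∈ E} :=
          sum_congr rfl fun i _ => (measure_pi_setOf_forall_lt_mem p hE i).symm
      _ ≤ M := sum_measure_pi_forall_lt_dist_le p hpK hs hK (n + 1)
  calc ∫⁻ x, (p (closedBall x s))⁻¹ ∂p = ∫⁻ v, ∑' k, b v ^ k ∂p := by
        simp only [hball, ENNReal.tsum_geometric]
    _ = ∑' k, ∫⁻ v, b v ^ k ∂p :=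
        lintegral_tsum fun k => ((measurable_measure_prodMk_right hE).pow_const k).aemeasurable
    _ ≤ M := ENNReal.tsum_le_of_sum_range_le fun n => by
        rw [← Fin.sum_univ_eq_sum_range]
        exact hsample n

theorem lintegral_inv_smul_measure {X : Type*} [MeasurableSpace X] (μ : Measure X)
    (S : X → Set X) {c : ℝ≥0∞} (hc₀ : c ≠ 0) (hc : c ≠ ∞) :
    ∫⁻ x, ((c • μ) (S x))⁻¹ ∂(c • μ) = ∫⁻ x, (μ (S x))⁻¹ ∂μ := by
  simp only [Measure.smul_apply, smul_eq_mul, lintegral_smul_measure,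
    ENNReal.mul_inv (.inl hc₀) (.inl hc), lintegral_const_mul' _ _ (ENNReal.inv_ne_top.2 hc₀),
    ← mul_assoc, ENNReal.inv_mul_cancel hc₀ hc, one_mul]

theorem lintegral_inv_measure_closedBall_le {X : Type*} [MetricSpace X]
    [MeasurableSpace X] [OpensMeasurableSpace X] [SecondCountableTopology X] (ν : Measure X)
    [IsFiniteMeasure ν] {K : Set X} (hνK : ∀ᵐ x ∂ν, x ∈ K) {s : ℝ} (hs : 0 ≤ s) {M : ℕ}
    (hK : ∀ t : Finset X, (↑t : Set X) ⊆ K → (∀ a ∈ t, ∀ b ∈ t, a ≠ b → s < dist a b) →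
      t.card ≤ M) :
    ∫⁻ x, (ν (closedBall x s))⁻¹ ∂ν ≤ M := by
  rcases eq_zero_or_neZero ν with rfl | hν
  · simp
  have hc₀ : ν Set.univ ≠ 0 := by simpa using hν.out
  have hscale : ν = ν Set.univ • (ν Set.univ)⁻¹ • ν := by
    rw [smul_smul, ENNReal.mul_inv_cancel hc₀ (measure_ne_top ν _), one_smul]
  rw [hscale, lintegral_inv_smul_measure _ _ hc₀ (measure_ne_top ν _)]
  exact lintegral_inv_measure_closedBall_le_of_isProbabilityMeasure _
    (Measure.ae_smul_measure hνK _) hs hK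

theorem stmt6_general {X : Type*} [MetricSpace X] [MeasurableSpace X] [BorelSpace X]
    (M : ℕ)
    (hnet : ∀ (x : X) (r : ℝ), 0 < r → ∀ t : Finset X,
      (↑t : Set X) ⊆ closedBall x r →
      (∀ a ∈ t, ∀ b ∈ t, a ≠ b → r < dist a b) → t.card ≤ M)
    (μ : Measure X)
    (hfin : ∀ s : Set X, Bornology.IsBounded s → μ s < ⊤)
    (hpos : ∀ U : Set X, IsOpen U → U.Nonempty → 0 < μ U) :
    ∀ s : ℝ, 0 < s → ∀ᵐ y ∂μ, conjFn μ s y ≤ (M : ℝ≥0∞) := by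
  intro s hs
  refine ae_of_all _ fun y => ?_
  have : Nonempty X := ⟨y⟩
  have : SigmaFinite μ := sigmaFinite_of_isBounded_lt_top μ hfin
  have : μ.IsOpenPosMeasure := ⟨fun U hU hne => (hpos U hU hne).ne'⟩
  -- needed for `dist` to be measurable on `X × X` in the product-measure argument
  have : SecondCountableTopology X := secondCountableTopology_of_isOpenPosMeasure μ
  have : IsFiniteMeasure (μ.restrict (closedBall y s)) :=
    isFiniteMeasure_restrict.2 (hfin _ isBounded_closedBall).ne
  calc conjFn μ s y
      ≤ ∫⁻ x, (μ.restrict (closedBall y s) (closedBall x s))⁻¹ ∂μ.restrict (closedBall y s) :=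
        lintegral_mono fun x => ENNReal.inv_le_inv.2 (Measure.restrict_apply_le _ _)
    _ ≤ M := lintegral_inv_measure_closedBall_le _ (ae_restrict_mem measurableSet_closedBall)
        hs.le (hnet y s hs)

/-- If every strict `r`-net inside a closed `r`-ball has at most `M` points, then
for every `s > 0` the conjugate function satisfies `a_s(y) ≤ M` for almost every `y`. -/
theorem stmt6 {X : Type*} [MetricSpace X] [MeasurableSpace X] [BorelSpace X]
    (M : ℕ) (hM : 0 < M)
    (hnet : ∀ (x : X) (r : ℝ), 0 < r → ∀ t : Finset X,
      (↑t : Set X) ⊆ closedBall x r →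
      (∀ a ∈ t, ∀ b ∈ t, a ≠ b → r < dist a b) → t.card ≤ M)
    (μ : Measure X)
    (hfin : ∀ s : Set X, Bornology.IsBounded s → μ s < ⊤)
    (hpos : ∀ U : Set X, IsOpen U → U.Nonempty → 0 < μ U) :
    ∀ s : ℝ, 0 < s → ∀ᵐ y ∂μ, conjFn μ s y ≤ (M : ℝ≥0∞) :=
  stmt6_general M hnet μ hfin hpos
end

section
/- Let (X,d) be a metric space and μ a Borel measure on X that is finite on every bounded Borel set and positive on every nonempty open set. Suppose μ satisfies a local comparability condition with constant C ≥ 1, i.e., for all x,y ∈ X and r > 0 with d(x,y) < r one has μ(B^cl(x,r)) ≤ C μ(B^cl(y,r)). Then for every p with 1 ≤ p < ∞ and every f ∈ L^p(μ), the averages A_r f converge to f in L^p(μ) as r → 0. -/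
open MeasureTheory Metric Filter Topology ENNReal

/-- The averaging operator `A_r f(x) = (1/μ(B^cl(x,r))) ∫_{B^cl(x,r)} f dμ`
over closed balls. -/
noncomputable def avgOp {X : Type*} [MetricSpace X] [MeasurableSpace X]
    (μ : Measure X) (r : ℝ) (f : X → ℝ) (x : X) : ℝ :=
  (μ (closedBall x r)).toReal⁻¹ * ∫ y in closedBall x r, f y ∂μ

section AvgAux

open scoped NNReal

variable {X : Type*} [MetricSpace X] [MeasurableSpace X] [BorelSpace X] {μ : Measure X}

lemma avg_sigmaFinite (hfin : ∀ s : Set X, Bornology.IsBounded s → μ s < ⊤) :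
    SigmaFinite μ := by
  rcases isEmpty_or_nonempty X with h | h
  · refine ⟨⟨⟨fun _ => Set.univ, fun _ => trivial, fun _ => ?_, Set.iUnion_const _⟩⟩⟩
    exact hfin _ (by rw [Set.univ_eq_empty_iff.2 h]; exact Bornology.isBounded_empty)
  · obtain ⟨x0⟩ := h
    refine ⟨⟨⟨fun n => closedBall x0 n, fun _ => trivial,
      fun n => hfin _ isBounded_closedBall, ?_⟩⟩⟩
    ext y
    simp only [Set.mem_iUnion, mem_closedBall, Set.mem_univ, iff_true]
    obtain ⟨n, hn⟩ := exists_nat_ge (dist y x0)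
    exact ⟨n, hn⟩

lemma avg_ball_ne_top (hfin : ∀ s : Set X, Bornology.IsBounded s → μ s < ⊤) (x : X) (r : ℝ) :
    μ (closedBall x r) ≠ ⊤ := (hfin _ isBounded_closedBall).ne

lemma avg_ball_ne_zero (hpos : ∀ U : Set X, IsOpen U → U.Nonempty → 0 < μ U)
    (x : X) {r : ℝ} (hr : 0 < r) : μ (closedBall x r) ≠ 0 :=
  ((hpos (ball x r) isOpen_ball ⟨x, mem_ball_self hr⟩).trans_le
    (measure_mono ball_subset_closedBall)).ne'


lemma avg_secondCountable (μ : Measure X)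
    (hfin : ∀ s : Set X, Bornology.IsBounded s → μ s < ⊤)
    (hpos : ∀ U : Set X, IsOpen U → U.Nonempty → 0 < μ U) :
    SecondCountableTopology X := by
  rcases isEmpty_or_nonempty X with h | h
  · exact Metric.secondCountable_of_almost_dense_set
      (fun ε hε => ⟨∅, Set.countable_empty, fun x => isEmptyElim x⟩)
  obtain ⟨x0⟩ := h
  apply Metric.secondCountable_of_almost_dense_set
  intro ε hε
  set S : Set (Set X) := {T | ∀ x ∈ T, ∀ y ∈ T, x ≠ y → ε ≤ dist x y} with hSdef
  obtain ⟨M, hMax⟩ : ∃ m, Maximal (· ∈ S) m := by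
    apply zorn_subset
    intro c hcS hchain
    refine ⟨⋃₀ c, ?_, fun s hs => Set.subset_sUnion_of_mem hs⟩
    intro x hx y hy hxy
    obtain ⟨s, hs, hxs⟩ := hx
    obtain ⟨t, ht, hyt⟩ := hy
    rcases eq_or_ne s t with rfl | hst
    · exact hcS hs x hxs y hyt hxy
    rcases hchain.total hs ht with hsub | hsub
    · exact hcS ht x (hsub hxs) y hyt hxy
    · exact hcS hs x hxs y (hsub hyt) hxy
  have hMS : M ∈ S := hMax.1
  have hdense : ∀ x, ∃ y ∈ M, dist x y ≤ ε := by
    intro x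
    by_contra hcon
    push_neg at hcon
    have hins : insert x M ∈ S := by
      intro a ha b hb hab
      rcases Set.mem_insert_iff.1 ha with rfl | haM
      · rcases Set.mem_insert_iff.1 hb with rfl | hbM
        · exact absurd rfl hab
        · exact (hcon b hbM).le
      · rcases Set.mem_insert_iff.1 hb with rfl | hbM
        · rw [dist_comm]; exact (hcon a haM).le
        · exact hMS a haM b hbM hab
    have hsub : insert x M ⊆ M := hMax.2 hins (Set.subset_insert x M)
    have hxM : x ∈ M := hsub (Set.mem_insert x M)
    exact absurd (hcon x hxM) (by simp [dist_self]; linarith)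
  refine ⟨M, ?_, hdense⟩
  have hcnt : ∀ n : ℕ, (M ∩ ball x0 n).Countable := by
    intro n
    have key := MeasureTheory.Measure.countable_meas_pos_of_disjoint_of_meas_iUnion_ne_top
      (ι := ↥(M ∩ ball x0 n)) μ (As := fun t => ball (t : X) (ε/3))
      (fun _ => measurableSet_ball) ?_ ?_
    · have huniv : {i : ↥(M ∩ ball x0 n) | 0 < μ (ball (i : X) (ε/3))} = Set.univ := by
        apply Set.eq_univ_of_forall
        intro i
        exact hpos _ isOpen_ball ⟨(i : X), mem_ball_self (by linarith)⟩
      rw [huniv, Set.countable_univ_iff] at key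
      exact Set.countable_coe_iff.1 key
    · intro i j hij
      apply ball_disjoint_ball
      have hne : (i : X) ≠ (j : X) := fun hc => hij (Subtype.coe_injective hc)
      have := hMS (i : X) i.2.1 (j : X) j.2.1 hne
      linarith
    · apply ne_top_of_le_ne_top (hfin (ball x0 (n + ε/3)) isBounded_ball).ne
      apply measure_mono
      apply Set.iUnion_subset
      intro i z hz
      have h1 : dist (i : X) x0 < n := i.2.2
      have h2 : dist z (i : X) < ε/3 := hz
      calc dist z x0 ≤ dist z (i : X) + dist (i : X) x0 := dist_triangle _ _ _
        _ < n + ε/3 := by linarith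
  have hM : M = ⋃ n : ℕ, (M ∩ ball x0 n) := by
    ext y
    simp only [Set.mem_iUnion, Set.mem_inter_iff, mem_ball]
    refine ⟨fun hy => ?_, fun ⟨n, hn, _⟩ => hn⟩
    obtain ⟨n, hn⟩ := exists_nat_gt (dist y x0)
    exact ⟨n, hy, hn⟩
  rw [hM]
  exact Set.countable_iUnion hcnt

lemma avg_measurable_measure_ball [SecondCountableTopology X] [SFinite μ] (r : ℝ) :
    Measurable fun x => μ (closedBall x r) := by
  have hS : MeasurableSet {p : X × X | dist p.2 p.1 ≤ r} :=
    (isClosed_le (continuous_dist.comp (continuous_snd.prodMk continuous_fst))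
      continuous_const).measurableSet
  have h : ∀ x, μ (closedBall x r)
      = ∫⁻ y, {p : X × X | dist p.2 p.1 ≤ r}.indicator (fun _ => (1 : ℝ≥0∞)) (x, y) ∂μ := by
    intro x
    rw [← lintegral_indicator_one measurableSet_closedBall]
    rfl
  simp_rw [h]
  exact Measurable.lintegral_prod_right (measurable_const.indicator hS)

lemma avg_stronglyMeasurable [SecondCountableTopology X] [SFinite μ] {f : X → ℝ} (hf : StronglyMeasurable f) (r : ℝ) :
    StronglyMeasurable (avgOp μ r f) := by
  rw [stronglyMeasurable_iff_measurable]
  apply Measurable.mul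
  · exact ((avg_measurable_measure_ball r).ennreal_toReal).inv
  · have hS : MeasurableSet {p : X × X | dist p.2 p.1 ≤ r} :=
      (isClosed_le (continuous_dist.comp (continuous_snd.prodMk continuous_fst))
        continuous_const).measurableSet
    have h : ∀ x, (∫ y in closedBall x r, f y ∂μ)
        = ∫ y, {p : X × X | dist p.2 p.1 ≤ r}.indicator (fun p => f p.2) (x, y) ∂μ := by
      intro x
      rw [← integral_indicator measurableSet_closedBall]
      rfl
    simp_rw [h]
    rw [← stronglyMeasurable_iff_measurable]
    exact StronglyMeasurable.integral_prod_right
      ((hf.comp_measurable measurable_snd).indicator hS)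

lemma avgOp_congr_ae {f g : X → ℝ} (h : f =ᵐ[μ] g) (r : ℝ) : avgOp μ r f = avgOp μ r g := by
  funext x
  unfold avgOp
  congr 1
  exact integral_congr_ae (ae_restrict_of_ae h)

lemma avgOp_sub {f g : X → ℝ} {r : ℝ} (x : X)
    (hf : IntegrableOn f (closedBall x r) μ) (hg : IntegrableOn g (closedBall x r) μ) :
    avgOp μ r (f - g) x = avgOp μ r f x - avgOp μ r g x := by
  unfold avgOp
  have : (∫ y in closedBall x r, (f - g) y ∂μ)
      = (∫ y in closedBall x r, f y ∂μ) - ∫ y in closedBall x r, g y ∂μ := by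
    simp only [Pi.sub_apply]
    exact integral_sub hf hg
  rw [this, mul_sub]

lemma avg_comp' (hfin : ∀ s : Set X, Bornology.IsBounded s → μ s < ⊤)
    {C : ℝ}
    (hcomp : ∀ (x y : X) (r : ℝ), 0 < r → dist x y < r →
      μ (closedBall x r) ≤ ENNReal.ofReal C * μ (closedBall y r))
    {x y : X} {r : ℝ} (hr : 0 < r) (hxy : dist x y ≤ r) :
    μ (closedBall y r) ≤ ENNReal.ofReal C * μ (closedBall x r) := by
  have hInt : (⋂ n : ℕ, closedBall x (r + 1 / (n + 1))) = closedBall x r := by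
    ext z
    simp only [Set.mem_iInter, mem_closedBall]
    constructor
    · intro h
      by_contra hlt
      push_neg at hlt
      obtain ⟨n, hn⟩ := exists_nat_one_div_lt (sub_pos.2 hlt)
      have := h n
      linarith
    · intro h n
      have : (0:ℝ) < 1 / ((n:ℝ) + 1) := by positivity
      linarith
  have hanti : Antitone fun n : ℕ => closedBall x (r + 1 / ((n:ℝ) + 1)) := by
    intro m n hmn
    apply closedBall_subset_closedBall
    have : (1:ℝ) / ((n:ℝ) + 1) ≤ 1 / ((m:ℝ) + 1) := by
      apply one_div_le_one_div_of_le (by positivity)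
      exact_mod_cast add_le_add_left (Nat.cast_le.2 hmn) 1
    linarith
  have hseq : Tendsto (fun n : ℕ => μ (closedBall x (r + 1 / (n + 1)))) atTop
      (𝓝 (μ (closedBall x r))) := by
    rw [← hInt]
    exact tendsto_measure_iInter_atTop (fun n => measurableSet_closedBall.nullMeasurableSet)
      hanti ⟨0, avg_ball_ne_top hfin _ _⟩
  have hle : ∀ n : ℕ, μ (closedBall y r) ≤ ENNReal.ofReal C * μ (closedBall x (r + 1 / (n + 1))) := by
    intro n
    have h1 : (0:ℝ) < 1 / ((n:ℝ) + 1) := by positivity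
    calc μ (closedBall y r) ≤ μ (closedBall y (r + 1 / (n + 1))) :=
          measure_mono (closedBall_subset_closedBall (by linarith))
      _ ≤ ENNReal.ofReal C * μ (closedBall x (r + 1 / (n + 1))) := by
          apply hcomp y x _ (by linarith)
          rw [dist_comm]
          exact lt_of_le_of_lt hxy (by linarith)
  exact ge_of_tendsto' (ENNReal.Tendsto.const_mul hseq (Or.inr ofReal_ne_top)) hle

lemma avg_inv_comp (hfin : ∀ s : Set X, Bornology.IsBounded s → μ s < ⊤)
    {C : ℝ} (hC : 1 ≤ C)
    (hcomp : ∀ (x y : X) (r : ℝ), 0 < r → dist x y < r →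
      μ (closedBall x r) ≤ ENNReal.ofReal C * μ (closedBall y r))
    {x y : X} {r : ℝ} (hr : 0 < r) (hxy : dist x y ≤ r) :
    (μ (closedBall x r))⁻¹ ≤ ENNReal.ofReal C * (μ (closedBall y r))⁻¹ := by
  have hC0 : ENNReal.ofReal C ≠ 0 := by
    simp only [ne_eq, ofReal_eq_zero, not_le]; linarith
  have h := avg_comp' hfin hcomp hr hxy
  have h2 : (ENNReal.ofReal C * μ (closedBall x r))⁻¹ ≤ (μ (closedBall y r))⁻¹ :=
    ENNReal.inv_le_inv.2 h
  rw [ENNReal.mul_inv (Or.inl hC0) (Or.inl ofReal_ne_top)] at h2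
  calc (μ (closedBall x r))⁻¹
      = ENNReal.ofReal C * ((ENNReal.ofReal C)⁻¹ * (μ (closedBall x r))⁻¹) := by
        rw [← mul_assoc, ENNReal.mul_inv_cancel hC0 ofReal_ne_top, one_mul]
    _ ≤ ENNReal.ofReal C * (μ (closedBall y r))⁻¹ := mul_le_mul_right h2 _

lemma avg_jensen {q : ℝ} (hq : 1 ≤ q) {g : X → ℝ≥0∞} (hg : Measurable g) {s : Set X}
    (hs0 : μ s ≠ 0) (hst : μ s ≠ ⊤) :
    ((μ s)⁻¹ * ∫⁻ y in s, g y ∂μ) ^ q ≤ (μ s)⁻¹ * ∫⁻ y in s, g y ^ q ∂μ := by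
  rcases eq_or_lt_of_le hq with heq | hlt
  · rw [← heq]
    simp
  · set q' : ℝ := q.conjExponent with hq'def
    have hconj : q.HolderConjugate q' := Real.HolderConjugate.conjExponent hlt
    have hq0 : (0:ℝ) < q := by linarith
    have hH := ENNReal.lintegral_mul_le_Lp_mul_Lq (μ.restrict s) hconj hg.aemeasurable
      (aemeasurable_const (b := (1:ℝ≥0∞)))
    simp only [Pi.mul_apply, mul_one, ENNReal.one_rpow, lintegral_one,
      Measure.restrict_apply_univ] at hH
    set a := μ s with hadef
    set I := ∫⁻ y in s, g y ^ q ∂μ with hIdef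
    have hsum := hconj.inv_add_inv_eq_one
    have key : a⁻¹ * (I ^ (1/q) * a ^ (1/q')) = (a⁻¹ * I) ^ (1/q) := by
      have h1 : a ^ (1/q') * a⁻¹ = (a⁻¹) ^ (1/q) := by
        rw [← ENNReal.rpow_neg_one a, ← ENNReal.rpow_add _ _ hs0 hst]
        rw [show 1/q' + (-1) = -(1/q) by
          rw [one_div, one_div]; linarith]
        rw [ENNReal.rpow_neg, ← ENNReal.inv_rpow, ENNReal.rpow_neg_one]
      calc a⁻¹ * (I ^ (1/q) * a ^ (1/q')) = I ^ (1/q) * (a ^ (1/q') * a⁻¹) := by ring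
        _ = I ^ (1/q) * (a⁻¹) ^ (1/q) := by rw [h1]
        _ = (I * a⁻¹) ^ (1/q) := (ENNReal.mul_rpow_of_nonneg _ _ (by positivity)).symm
        _ = (a⁻¹ * I) ^ (1/q) := by rw [mul_comm]
    calc ((μ s)⁻¹ * ∫⁻ y in s, g y ∂μ) ^ q
        ≤ (a⁻¹ * (I ^ (1/q) * a ^ (1/q'))) ^ q := by
          apply ENNReal.rpow_le_rpow _ hq0.le
          exact mul_le_mul_right hH _
      _ = ((a⁻¹ * I) ^ (1/q)) ^ q := by rw [key]
      _ = (a⁻¹ * I) ^ ((1/q) * q) := by rw [← ENNReal.rpow_mul]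
      _ = a⁻¹ * I := by rw [one_div, inv_mul_cancel₀ hq0.ne', ENNReal.rpow_one]

lemma avg_enorm_le (x : X) (r : ℝ) (f : X → ℝ) :
    (‖avgOp μ r f x‖₊ : ℝ≥0∞) ≤ (μ (closedBall x r))⁻¹ * ∫⁻ y in closedBall x r, ‖f y‖₊ ∂μ := by
  unfold avgOp
  rw [nnnorm_mul, ENNReal.coe_mul]
  refine mul_le_mul' ?_ (enorm_integral_le_lintegral_enorm _)
  set a := μ (closedBall x r) with hadef
  rcases eq_or_ne a 0 with ha | ha
  · simp [ha]
  rcases eq_or_ne a ⊤ with hat | hat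
  · simp [hat]
  · rw [← enorm_eq_nnnorm, Real.enorm_eq_ofReal (inv_nonneg.2 ENNReal.toReal_nonneg)]
    rw [← ENNReal.toReal_inv, ENNReal.ofReal_toReal (ENNReal.inv_ne_top.2 ha)]

lemma avg_fubini [SecondCountableTopology X] [SFinite μ]
    (hfin : ∀ s : Set X, Bornology.IsBounded s → μ s < ⊤)
    (hpos : ∀ U : Set X, IsOpen U → U.Nonempty → 0 < μ U)
    {C : ℝ} (hC : 1 ≤ C)
    (hcomp : ∀ (x y : X) (r : ℝ), 0 < r → dist x y < r →
      μ (closedBall x r) ≤ ENNReal.ofReal C * μ (closedBall y r))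
    {r : ℝ} (hr : 0 < r) {G : X → ℝ≥0∞} (hG : Measurable G) :
    ∫⁻ x, (μ (closedBall x r))⁻¹ * ∫⁻ y in closedBall x r, G y ∂μ ∂μ
      ≤ ENNReal.ofReal C * ∫⁻ y, G y ∂μ := by
  have hpos' : ∀ y : X, μ (closedBall y r) ≠ 0 := fun y => avg_ball_ne_zero hpos y hr
  set S : Set (X × X) := {p | dist p.2 p.1 ≤ r} with hSdef
  have hSmeas : MeasurableSet S :=
    (isClosed_le (continuous_dist.comp (continuous_snd.prodMk continuous_fst))
      continuous_const).measurableSet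
  set F : X → X → ℝ≥0∞ := fun x y =>
    S.indicator (fun p => (μ (closedBall p.1 r))⁻¹ * G p.2) (x, y) with hFdef
  have hFm : Measurable (Function.uncurry F) := by
    apply Measurable.indicator _ hSmeas
    exact ((avg_measurable_measure_ball r).comp measurable_fst).inv.mul (hG.comp measurable_snd)
  have h1 : ∀ x, (μ (closedBall x r))⁻¹ * ∫⁻ y in closedBall x r, G y ∂μ = ∫⁻ y, F x y ∂μ := by
    intro x
    rw [← lintegral_indicator measurableSet_closedBall,
      ← lintegral_const_mul' _ _ (ENNReal.inv_ne_top.2 (hpos' x))]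
    congr 1
    funext y
    by_cases hy : dist y x ≤ r
    · rw [Set.indicator_of_mem (mem_closedBall.2 hy)]
      exact (Set.indicator_of_mem (show (x, y) ∈ S from hy) (fun p => (μ (closedBall p.1 r))⁻¹ * G p.2)).symm
    · rw [Set.indicator_of_notMem (fun hc => hy (mem_closedBall.1 hc)), mul_zero]
      exact (Set.indicator_of_notMem (show (x, y) ∉ S from hy) (fun p => (μ (closedBall p.1 r))⁻¹ * G p.2)).symm
  simp_rw [h1]
  rw [lintegral_lintegral_swap hFm.aemeasurable]
  have h2 : ∀ y, ∫⁻ x, F x y ∂μ ≤ ENNReal.ofReal C * G y := by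
    intro y
    have hFy : (fun x => F x y)
        = (closedBall y r).indicator (fun x => (μ (closedBall x r))⁻¹ * G y) := by
      funext x
      by_cases hxy : x ∈ closedBall y r
      · rw [Set.indicator_of_mem hxy]
        exact Set.indicator_of_mem (by simpa [hSdef, dist_comm] using mem_closedBall.1 hxy) _
      · rw [Set.indicator_of_notMem hxy]
        exact Set.indicator_of_notMem
          (fun hc => hxy (mem_closedBall.2 (by simpa [hSdef, dist_comm] using hc))) _
    rw [hFy, lintegral_indicator measurableSet_closedBall]
    calc ∫⁻ x in closedBall y r, (μ (closedBall x r))⁻¹ * G y ∂μ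
        ≤ ∫⁻ x in closedBall y r, (ENNReal.ofReal C * (μ (closedBall y r))⁻¹) * G y ∂μ := by
          apply setLIntegral_mono measurable_const
          intro x hx
          exact mul_le_mul_left
            (avg_inv_comp hfin hC hcomp hr (mem_closedBall.1 hx)) _
      _ = ENNReal.ofReal C * ((μ (closedBall y r))⁻¹ * μ (closedBall y r)) * G y := by
          rw [setLIntegral_const]; ring
      _ = ENNReal.ofReal C * G y := by
          rw [ENNReal.inv_mul_cancel (hpos' y) (avg_ball_ne_top hfin y r), mul_one]
  calc ∫⁻ y, ∫⁻ x, F x y ∂μ ∂μ ≤ ∫⁻ y, ENNReal.ofReal C * G y ∂μ := lintegral_mono h2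
    _ = ENNReal.ofReal C * ∫⁻ y, G y ∂μ := lintegral_const_mul' _ _ ofReal_ne_top

lemma avg_eLpNorm_le [SecondCountableTopology X] [SFinite μ]
    (hfin : ∀ s : Set X, Bornology.IsBounded s → μ s < ⊤)
    (hpos : ∀ U : Set X, IsOpen U → U.Nonempty → 0 < μ U)
    {C : ℝ} (hC : 1 ≤ C)
    (hcomp : ∀ (x y : X) (r : ℝ), 0 < r → dist x y < r →
      μ (closedBall x r) ≤ ENNReal.ofReal C * μ (closedBall y r))
    {p : ℝ≥0∞} (hp1 : 1 ≤ p) (hpt : p ≠ ⊤) {r : ℝ} (hr : 0 < r) {f : X → ℝ}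
    (hf : AEStronglyMeasurable f μ) :
    eLpNorm (avgOp μ r f) p μ ≤ ENNReal.ofReal C ^ (1 / p.toReal) * eLpNorm f p μ := by
  have hp0 : p ≠ 0 := by
    intro h
    rw [h] at hp1
    exact absurd hp1 (by simp)
  set q := p.toReal with hqdef
  have hq1 : 1 ≤ q := by
    rw [hqdef, ← ENNReal.toReal_one]
    exact ENNReal.toReal_mono hpt hp1
  have hq0 : (0:ℝ) < q := by linarith
  obtain ⟨f', hf'sm, hff'⟩ := hf
  rw [avgOp_congr_ae hff' r, eLpNorm_congr_ae hff']
  rw [eLpNorm_eq_lintegral_rpow_enorm_toReal hp0 hpt, eLpNorm_eq_lintegral_rpow_enorm_toReal hp0 hpt]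
  rw [← ENNReal.mul_rpow_of_nonneg _ _ (by positivity : (0:ℝ) ≤ 1/q)]
  apply ENNReal.rpow_le_rpow _ (by positivity)
  have hGm : Measurable fun y => (‖f' y‖₊ : ℝ≥0∞) := hf'sm.measurable.nnnorm.coe_nnreal_ennreal
  have hGqm : Measurable fun y => (‖f' y‖₊ : ℝ≥0∞) ^ q := hGm.pow_const q
  calc ∫⁻ x, (‖avgOp μ r f' x‖₊ : ℝ≥0∞) ^ q ∂μ
      ≤ ∫⁻ x, (μ (closedBall x r))⁻¹ * ∫⁻ y in closedBall x r, (‖f' y‖₊ : ℝ≥0∞) ^ q ∂μ ∂μ := by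
        apply lintegral_mono
        intro x
        calc (‖avgOp μ r f' x‖₊ : ℝ≥0∞) ^ q
            ≤ ((μ (closedBall x r))⁻¹ * ∫⁻ y in closedBall x r, (‖f' y‖₊ : ℝ≥0∞) ∂μ) ^ q :=
              ENNReal.rpow_le_rpow (avg_enorm_le x r f') hq0.le
          _ ≤ _ := avg_jensen hq1 hGm (avg_ball_ne_zero hpos x hr) (avg_ball_ne_top hfin x r)
    _ ≤ ENNReal.ofReal C * ∫⁻ y, (‖f' y‖₊ : ℝ≥0∞) ^ q ∂μ :=
        avg_fubini hfin hpos hC hcomp hr hGqm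

lemma avg_lip_const_mul {f : X → ℝ} {c : ℝ} {K : ℝ≥0} (h : LipschitzWith K f) :
    LipschitzWith (‖c‖₊ * K) (fun x => c * f x) := by
  apply LipschitzWith.of_dist_le_mul
  intro x y
  rw [Real.dist_eq, ← mul_sub, abs_mul, NNReal.coe_mul, mul_assoc]
  apply mul_le_mul_of_nonneg_left _ (abs_nonneg c)
  rw [← Real.dist_eq]
  simpa using h.dist_le_mul x y

lemma avg_bounded_of_lip {g : X → ℝ} {K : ℝ≥0} (hg : LipschitzWith K g) {x0 : X} {R : ℝ}
    (hR : 0 ≤ R) (hsupp : ∀ x ∉ closedBall x0 R, g x = 0) (x : X) :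
    |g x| ≤ |g x0| + K * R := by
  by_cases hx : x ∈ closedBall x0 R
  · have h1 : |g x - g x0| ≤ (K : ℝ) * R := by
      have := hg.dist_le_mul x x0
      rw [Real.dist_eq] at this
      calc |g x - g x0| ≤ (K : ℝ) * dist x x0 := this
        _ ≤ (K : ℝ) * R := mul_le_mul_of_nonneg_left (mem_closedBall.1 hx) K.coe_nonneg
    calc |g x| = |g x0 + (g x - g x0)| := by ring_nf
      _ ≤ |g x0| + |g x - g x0| := abs_add_le _ _
      _ ≤ |g x0| + K * R := add_le_add_right h1 _
  · rw [hsupp x hx, abs_zero]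
    positivity

lemma avg_integrableOn_of_bounded
    (hfin : ∀ s : Set X, Bornology.IsBounded s → μ s < ⊤)
    {g : X → ℝ} (hgc : Continuous g) {M : ℝ} (hM : ∀ x, |g x| ≤ M)
    {s : Set X} (hs : Bornology.IsBounded s) : IntegrableOn g s μ := by
  haveI : IsFiniteMeasure (μ.restrict s) :=
    ⟨by rw [Measure.restrict_apply_univ]; exact hfin s hs⟩
  exact Integrable.mono' (integrable_const M) hgc.aestronglyMeasurable
    (Filter.Eventually.of_forall fun x => by simpa [Real.norm_eq_abs] using hM x)

lemma avg_nice
    (hfin : ∀ s : Set X, Bornology.IsBounded s → μ s < ⊤)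
    (hpos : ∀ U : Set X, IsOpen U → U.Nonempty → 0 < μ U)
    {g : X → ℝ} {K : ℝ≥0} (hg : LipschitzWith K g)
    {x0 : X} {R : ℝ} (hR : 0 ≤ R) (hsupp : ∀ x ∉ closedBall x0 R, g x = 0)
    {p : ℝ≥0∞} (hp0 : p ≠ 0) (hpt : p ≠ ⊤) {r : ℝ} (hr : 0 < r) (hr1 : r ≤ 1) :
    eLpNorm (fun x => avgOp μ r g x - g x) p μ
      ≤ ENNReal.ofReal ((K : ℝ) * r) * μ (closedBall x0 (R + 2)) ^ (1 / p.toReal) := by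
  set M := |g x0| + (K : ℝ) * R with hMdef
  have hM : ∀ x, |g x| ≤ M := avg_bounded_of_lip hg hR hsupp
  have hint : ∀ x : X, IntegrableOn g (closedBall x r) μ := fun x =>
    avg_integrableOn_of_bounded hfin hg.continuous hM isBounded_closedBall
  have hpt1 : ∀ x, |avgOp μ r g x - g x| ≤ (K : ℝ) * r := by
    intro x
    have ha0 : (μ (closedBall x r)).toReal ≠ 0 := by
      rw [ENNReal.toReal_ne_zero]
      exact ⟨avg_ball_ne_zero hpos x hr, avg_ball_ne_top hfin x r⟩
    have hkey : avgOp μ r g x - g x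
        = (μ (closedBall x r)).toReal⁻¹ * ∫ y in closedBall x r, (g y - g x) ∂μ := by
      unfold avgOp
      rw [integral_sub (hint x) (integrableOn_const (hfin _ isBounded_closedBall).ne),
        mul_sub, setIntegral_const, smul_eq_mul, measureReal_def, ← mul_assoc, inv_mul_cancel₀ ha0, one_mul]
    rw [hkey, abs_mul, abs_of_nonneg (inv_nonneg.2 ENNReal.toReal_nonneg)]
    have hbound : ‖∫ y in closedBall x r, (g y - g x) ∂μ‖
        ≤ (μ (closedBall x r)).toReal * ((K : ℝ) * r) := by
      calc ‖∫ y in closedBall x r, (g y - g x) ∂μ‖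
          ≤ ∫ y in closedBall x r, ‖g y - g x‖ ∂μ := norm_integral_le_integral_norm _
        _ ≤ ∫ y in closedBall x r, (K : ℝ) * r ∂μ := by
            apply setIntegral_mono_on
            · exact ((hint x).sub (integrableOn_const
                (hfin _ isBounded_closedBall).ne)).norm
            · exact integrableOn_const (hfin _ isBounded_closedBall).ne
            · exact measurableSet_closedBall
            · intro y hy
              have h5 := hg.dist_le_mul y x
              rw [Real.dist_eq] at h5
              rw [Real.norm_eq_abs]
              calc |g y - g x| ≤ (K : ℝ) * dist y x := h5
                _ ≤ (K : ℝ) * r :=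
                  mul_le_mul_of_nonneg_left (mem_closedBall.1 hy) K.coe_nonneg
        _ = (μ (closedBall x r)).toReal * ((K : ℝ) * r) := by
            rw [setIntegral_const, smul_eq_mul, measureReal_def]
    rw [Real.norm_eq_abs] at hbound
    calc (μ (closedBall x r)).toReal⁻¹ * |∫ y in closedBall x r, (g y - g x) ∂μ|
        ≤ (μ (closedBall x r)).toReal⁻¹ * ((μ (closedBall x r)).toReal * ((K : ℝ) * r)) :=
          mul_le_mul_of_nonneg_left hbound (inv_nonneg.2 ENNReal.toReal_nonneg)
      _ = (K : ℝ) * r := by rw [← mul_assoc, inv_mul_cancel₀ ha0, one_mul]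
  have hsupp2 : ∀ x ∉ closedBall x0 (R + 2), avgOp μ r g x - g x = 0 := by
    intro x hx
    have hxfar : R + 2 < dist x x0 := by
      by_contra hcon
      push_neg at hcon
      exact hx (mem_closedBall.2 hcon)
    have hgx0 : g x = 0 := by
      apply hsupp x
      intro hc
      have := mem_closedBall.1 hc
      linarith
    have hint0 : (∫ y in closedBall x r, g y ∂μ) = 0 := by
      rw [setIntegral_congr_fun measurableSet_closedBall
        (fun y hy => show g y = (0:ℝ) by
          apply hsupp y
          intro hc
          have h1 : dist y x ≤ r := mem_closedBall.1 hy
          have h2 : dist y x0 ≤ R := mem_closedBall.1 hc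
          have h3 : dist x x0 ≤ dist x y + dist y x0 := dist_triangle _ _ _
          rw [dist_comm x y] at h3
          linarith)]
      simp
    unfold avgOp
    rw [hint0, hgx0, mul_zero, sub_zero]
  have hmono : ∀ x, ‖avgOp μ r g x - g x‖
      ≤ ‖(closedBall x0 (R + 2)).indicator (fun _ => (K : ℝ) * r) x‖ := by
    intro x
    by_cases hx : x ∈ closedBall x0 (R + 2)
    · rw [Set.indicator_of_mem hx]
      simp only [Real.norm_eq_abs]
      rw [abs_of_nonneg (by positivity : (0:ℝ) ≤ (K : ℝ) * r)]
      exact hpt1 x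
    · rw [Set.indicator_of_notMem hx, hsupp2 x hx]
  calc eLpNorm (fun x => avgOp μ r g x - g x) p μ
      ≤ eLpNorm ((closedBall x0 (R + 2)).indicator (fun _ => (K : ℝ) * r)) p μ :=
        eLpNorm_mono hmono
    _ = ‖(K : ℝ) * r‖₊ * μ (closedBall x0 (R + 2)) ^ (1 / p.toReal) :=
        eLpNorm_indicator_const measurableSet_closedBall hp0 hpt
    _ = ENNReal.ofReal ((K : ℝ) * r) * μ (closedBall x0 (R + 2)) ^ (1 / p.toReal) := by
        rw [← Real.enorm_eq_ofReal (by positivity), enorm_eq_nnnorm]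

lemma avg_dense [SecondCountableTopology X] [SFinite μ]
    (hfin : ∀ s : Set X, Bornology.IsBounded s → μ s < ⊤)
    (x0 : X) {p : ℝ≥0∞} (hp1 : 1 ≤ p) (hpt : p ≠ ⊤)
    {f : X → ℝ} (hf : MemLp f p μ) {ε : ℝ≥0∞} (hε : ε ≠ 0) :
    ∃ (g : X → ℝ) (K : ℝ≥0) (R : ℝ), 0 ≤ R ∧ LipschitzWith K g ∧
      (∀ x ∉ closedBall x0 R, g x = 0) ∧ eLpNorm (f - g) p μ ≤ ε := by
  have hp0 : p ≠ 0 := by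
    intro h
    rw [h] at hp1
    exact absurd hp1 (by simp)
  have hq0 : 0 < p.toReal := ENNReal.toReal_pos hp0 hpt
  set P : (X → ℝ) → Prop := fun g => ∃ (K : ℝ≥0) (R : ℝ), 0 ≤ R ∧ LipschitzWith K g ∧
    ∀ x ∉ closedBall x0 R, g x = 0 with hPdef
  have h1P : ∀ f g, P f → P g → P (f + g) := by
    rintro f g ⟨Kf, Rf, hRf, hLf, hsf⟩ ⟨Kg, Rg, hRg, hLg, hsg⟩
    refine ⟨Kf + Kg, max Rf Rg, le_trans hRf (le_max_left _ _), hLf.add hLg, ?_⟩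
    intro x hx
    have hx1 : x ∉ closedBall x0 Rf :=
      fun hc => hx (closedBall_subset_closedBall (le_max_left _ _) hc)
    have hx2 : x ∉ closedBall x0 Rg :=
      fun hc => hx (closedBall_subset_closedBall (le_max_right _ _) hc)
    simp [hsf x hx1, hsg x hx2]
  have h2P : ∀ f, P f → AEStronglyMeasurable f μ := by
    rintro f ⟨K, R, hR, hLf, -⟩
    exact hLf.continuous.aestronglyMeasurable
  have h0P : ∀ (c : ℝ) ⦃s : Set X⦄, MeasurableSet s → μ s < ⊤ →
      ∀ {δ : ℝ≥0∞}, δ ≠ 0 →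
        ∃ g : X → ℝ, eLpNorm (g - s.indicator fun _ => c) p μ ≤ δ ∧ P g := by
    intro c s hs hμs δ hδ
    rcases eq_or_ne c 0 with rfl | hc
    · refine ⟨0, ?_, 0, 0, le_rfl, LipschitzWith.const 0, fun x _ => rfl⟩
      have h0 : s.indicator (fun _ => (0:ℝ)) = 0 := Set.indicator_zero' _
      rw [h0, sub_zero, eLpNorm_zero]
      exact zero_le
    · have hcn0 : (‖c‖₊ : ℝ≥0∞) ≠ 0 := by simpa using hc
      have hcnt : (‖c‖₊ : ℝ≥0∞) ≠ ⊤ := ENNReal.coe_ne_top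
      set δ' : ℝ≥0∞ := δ / (3 * ‖c‖₊) with hδ'def
      have hδ'0 : δ' ≠ 0 := by
        apply (ENNReal.div_pos hδ ?_).ne'
        exact ENNReal.mul_ne_top (by simp) hcnt
      set γ : ℝ≥0∞ := δ' ^ p.toReal with hγdef
      have hγ0 : 0 < γ := by
        rw [hγdef, pos_iff_ne_zero]
        intro h
        rw [ENNReal.rpow_eq_zero_iff] at h
        rcases h with ⟨h1, -⟩ | ⟨-, h2⟩
        · exact hδ'0 h1
        · linarith
      -- Step 1: truncate to a bounded set
      have htrunc : Tendsto (fun n : ℕ => μ (s \ ball x0 n)) atTop (𝓝 0) := by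
        have hIempty : (⋂ n : ℕ, s \ ball x0 n) = ∅ := by
          ext y
          simp only [Set.mem_iInter, Set.mem_diff, Set.mem_empty_iff_false, iff_false,
            not_forall]
          obtain ⟨n, hn⟩ := exists_nat_gt (dist y x0)
          exact ⟨n, fun h => h.2 (mem_ball.2 hn)⟩
        have h := tendsto_measure_iInter_atTop (μ := μ) (s := fun n : ℕ => s \ ball x0 n)
          (fun n => (hs.diff measurableSet_ball).nullMeasurableSet)
          (fun m n hmn => Set.diff_subset_diff_right
            (ball_subset_ball (by exact_mod_cast hmn)))
          ⟨0, ((measure_mono Set.diff_subset).trans_lt hμs).ne⟩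
        rwa [hIempty, measure_empty] at h
      obtain ⟨n, hn⟩ := (htrunc.eventually_lt_const hγ0).exists
      set s' := s ∩ ball x0 n with hs'def
      have hs'meas : MeasurableSet s' := hs.inter measurableSet_ball
      -- Step 2: outer approximation by an open set inside the ball
      set ν := μ.restrict (ball x0 n) with hνdef
      haveI : IsFiniteMeasure ν :=
        ⟨by rw [hνdef, Measure.restrict_apply_univ]; exact hfin _ isBounded_ball⟩
      have hsν : ν s' < ν s' + γ := ENNReal.lt_add_right (measure_ne_top ν s') hγ0.ne'
      obtain ⟨U, hU1, hU2, hU3⟩ := Set.exists_isOpen_lt_of_lt s' _ hsν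
      set V := U ∩ ball x0 n with hVdef
      have hVo : IsOpen V := hU2.inter isOpen_ball
      have hVmeas : MeasurableSet V := hVo.measurableSet
      have hs'V : s' ⊆ V := fun y hy => ⟨hU1 hy, hy.2⟩
      have hVs' : μ (V \ s') < γ := by
        have hsub : V \ s' ⊆ (U \ s') ∩ ball x0 n := fun y hy => ⟨⟨hy.1.1, hy.2⟩, hy.1.2⟩
        calc μ (V \ s') ≤ μ ((U \ s') ∩ ball x0 n) := measure_mono hsub
          _ = ν (U \ s') := (Measure.restrict_apply (hU2.measurableSet.diff hs'meas)).symm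
          _ = ν U - ν s' := measure_diff hU1 hs'meas.nullMeasurableSet (measure_ne_top ν s')
          _ < γ := by
            exact ENNReal.sub_lt_of_lt_add (measure_mono hU1) (by rwa [add_comm] at hU3)
      have hμV : μ V < ⊤ :=
        (measure_mono Set.inter_subset_right).trans_lt (hfin _ isBounded_ball)
      -- Step 3: Lipschitz function close to the indicator of s
      obtain ⟨g0, K0, W, hWmeas, hWsmall, hLg0, hsuppg0, hcov⟩ :
          ∃ (g0 : X → ℝ) (K0 : ℝ≥0) (W : Set X), MeasurableSet W ∧ μ W < γ ∧
            LipschitzWith K0 g0 ∧ (∀ x ∉ closedBall x0 (n : ℝ), g0 x = 0) ∧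
            ∀ x, |g0 x - s.indicator (fun _ => (1:ℝ)) x|
              ≤ W.indicator (fun _ => (1:ℝ)) x + ((V \ s').indicator (fun _ => (1:ℝ)) x
                + (s \ ball x0 n).indicator (fun _ => (1:ℝ)) x) := by
        by_cases hVc : Vᶜ = ∅
        · -- V = univ; the constant 1 works
          have hVuniv : ∀ x : X, x ∈ V := by
            intro x
            by_contra hx
            exact (Set.eq_empty_iff_forall_notMem.1 hVc x) hx
          refine ⟨fun _ => 1, 1, ∅, MeasurableSet.empty, by simpa using hγ0,
            LipschitzWith.const' 1, ?_, ?_⟩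
          · intro x hx
            exact absurd (ball_subset_closedBall (hVuniv x).2) hx
          · intro x
            have hnn : (0:ℝ) ≤ (∅ : Set X).indicator (fun _ => (1:ℝ)) x
                + ((V \ s').indicator (fun _ => (1:ℝ)) x
                  + (s \ ball x0 n).indicator (fun _ => (1:ℝ)) x) :=
              add_nonneg (Set.indicator_nonneg (fun _ _ => zero_le_one) _)
                (add_nonneg (Set.indicator_nonneg (fun _ _ => zero_le_one) _)
                  (Set.indicator_nonneg (fun _ _ => zero_le_one) _))
            by_cases hxs : x ∈ s
            · rw [Set.indicator_of_mem hxs]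
              simp only [sub_self, abs_zero]
              exact hnn
            · rw [Set.indicator_of_notMem hxs, sub_zero, abs_one]
              have hxs' : x ∉ s' := fun hc => hxs hc.1
              have h2 : (V \ s').indicator (fun _ => (1:ℝ)) x = 1 :=
                Set.indicator_of_mem ((Set.mem_diff _).2 ⟨hVuniv x, hxs'⟩) _
              have h4 : (0:ℝ) ≤ (∅ : Set X).indicator (fun _ => (1:ℝ)) x :=
                Set.indicator_nonneg (fun _ _ => zero_le_one) x
              have h6 : (0:ℝ) ≤ (s \ ball x0 n).indicator (fun _ => (1:ℝ)) x :=
                Set.indicator_nonneg (fun _ _ => zero_le_one) x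
              rw [h2]
              linarith
        · have hVcne : (Vᶜ : Set X).Nonempty := Set.nonempty_iff_ne_empty.2 hVc
          set F : ℕ → Set X := fun k => {x | 1 / ((k:ℝ)+1) ≤ infDist x Vᶜ} with hFdef
          have hFtend : Tendsto (fun k : ℕ => μ (V \ F k)) atTop (𝓝 0) := by
            have hIempty : (⋂ k : ℕ, V \ F k) = ∅ := by
              ext y
              simp only [Set.mem_iInter, Set.mem_diff, Set.mem_empty_iff_false, iff_false,
                not_forall]
              by_cases hy : y ∈ V
              · have hpos' : 0 < infDist y Vᶜ :=
                  (hVo.isClosed_compl.notMem_iff_infDist_pos hVcne).1 (by simpa using hy)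
                obtain ⟨k, hk⟩ := exists_nat_one_div_lt hpos'
                exact ⟨k, fun h => h.2 hk.le⟩
              · exact ⟨0, fun h => hy h.1⟩
            have h := tendsto_measure_iInter_atTop (μ := μ) (s := fun k : ℕ => V \ F k)
              (fun k => (hVmeas.diff ((isClosed_le continuous_const
                (continuous_infDist_pt _)).measurableSet)).nullMeasurableSet)
              (fun a b hab => Set.diff_subset_diff_right (fun x hx => by
                have h1 : (1:ℝ) / ((b:ℝ)+1) ≤ 1 / ((a:ℝ)+1) := by
                  apply one_div_le_one_div_of_le (by positivity)
                  exact_mod_cast add_le_add_left (Nat.cast_le.2 hab) 1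
                exact le_trans h1 hx))
              ⟨0, ((measure_mono Set.diff_subset).trans_lt hμV).ne⟩
            rwa [hIempty, measure_empty] at h
          obtain ⟨k, hk⟩ := (hFtend.eventually_lt_const hγ0).exists
          set g0 : X → ℝ := fun x => min 1 (((k:ℝ)+1) * infDist x Vᶜ) with hg0def
          have hg0nonneg : ∀ x, 0 ≤ g0 x := by
            intro x
            apply le_min zero_le_one
            have := infDist_nonneg (s := (Vᶜ : Set X)) (x := x)
            positivity
          have hg0le1 : ∀ x, g0 x ≤ 1 := fun x => min_le_left _ _
          have hg0V : ∀ x, x ∉ V → g0 x = 0 := by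
            intro x hx
            have h1 : infDist x Vᶜ = 0 := infDist_zero_of_mem hx
            rw [hg0def]
            simp [h1]
          have hg0F : ∀ x, x ∈ F k → g0 x = 1 := by
            intro x hx
            have h1 : (1:ℝ) ≤ ((k:ℝ)+1) * infDist x Vᶜ := by
              have h2 : 1 / ((k:ℝ)+1) ≤ infDist x Vᶜ := hx
              have h3 : (0:ℝ) < (k:ℝ)+1 := by positivity
              calc (1:ℝ) = ((k:ℝ)+1) * (1 / ((k:ℝ)+1)) := by field_simp
                _ ≤ ((k:ℝ)+1) * infDist x Vᶜ := mul_le_mul_of_nonneg_left h2 h3.le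
            rw [hg0def]
            simp only [min_eq_left_iff]
            exact h1
          have hlip : LipschitzWith (⟨(k:ℝ)+1, by positivity⟩ : ℝ≥0)
              (fun x => ((k:ℝ)+1) * infDist x Vᶜ) := by
            apply LipschitzWith.of_dist_le_mul
            intro x y
            have h := (lipschitz_infDist_pt (Vᶜ : Set X)).dist_le_mul x y
            rw [NNReal.coe_one, one_mul] at h
            rw [Real.dist_eq, ← mul_sub, abs_mul,
              abs_of_nonneg (by positivity : (0:ℝ) ≤ (k:ℝ)+1)]
            calc ((k:ℝ)+1) * |infDist x Vᶜ - infDist y Vᶜ|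
                ≤ ((k:ℝ)+1) * dist x y := by
                  apply mul_le_mul_of_nonneg_left _ (by positivity)
                  rw [← Real.dist_eq]
                  exact h
              _ = _ := rfl
          refine ⟨g0, max (⟨(k:ℝ)+1, by positivity⟩ : ℝ≥0) (⟨(k:ℝ)+1, by positivity⟩ : ℝ≥0),
            V \ F k, hVmeas.diff ((isClosed_le continuous_const
              (continuous_infDist_pt _)).measurableSet), hk, ?_, ?_, ?_⟩
          · exact (LipschitzWith.const' (1:ℝ)).min hlip
          · intro x hx
            apply hg0V
            intro hc
            exact hx (ball_subset_closedBall hc.2)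
          · intro x
            have h4 : (0:ℝ) ≤ (V \ F k).indicator (fun _ => (1:ℝ)) x :=
              Set.indicator_nonneg (fun _ _ => zero_le_one) x
            have h5 : (0:ℝ) ≤ (V \ s').indicator (fun _ => (1:ℝ)) x :=
              Set.indicator_nonneg (fun _ _ => zero_le_one) x
            have h6 : (0:ℝ) ≤ (s \ ball x0 n).indicator (fun _ => (1:ℝ)) x :=
              Set.indicator_nonneg (fun _ _ => zero_le_one) x
            by_cases hxs : x ∈ s
            · rw [Set.indicator_of_mem hxs]
              by_cases hxb : x ∈ ball x0 n
              · have hxV : x ∈ V := hs'V ⟨hxs, hxb⟩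
                by_cases hxF : x ∈ F k
                · rw [hg0F x hxF]
                  simp only [sub_self, abs_zero]
                  linarith
                · have h7 : (V \ F k).indicator (fun _ => (1:ℝ)) x = 1 :=
                    Set.indicator_of_mem ((Set.mem_diff _).2 ⟨hxV, hxF⟩) _
                  rw [h7]
                  have h8 : |g0 x - 1| ≤ 1 := by
                    rw [abs_le]
                    constructor <;> [linarith [hg0nonneg x]; linarith [hg0le1 x]]
                  linarith
              · have h7 : (s \ ball x0 n).indicator (fun _ => (1:ℝ)) x = 1 :=
                  Set.indicator_of_mem ((Set.mem_diff _).2 ⟨hxs, hxb⟩) _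
                rw [h7]
                have h8 : |g0 x - 1| ≤ 1 := by
                  rw [abs_le]
                  constructor <;> [linarith [hg0nonneg x]; linarith [hg0le1 x]]
                linarith
            · rw [Set.indicator_of_notMem hxs, sub_zero]
              by_cases hxV : x ∈ V
              · have hxs' : x ∉ s' := fun hc => hxs hc.1
                have h7 : (V \ s').indicator (fun _ => (1:ℝ)) x = 1 :=
                  Set.indicator_of_mem ((Set.mem_diff _).2 ⟨hxV, hxs'⟩) _
                rw [h7, abs_of_nonneg (hg0nonneg x)]
                linarith [hg0le1 x]
              · rw [hg0V x hxV, abs_zero]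
                linarith
      -- Step 4: conclude
      have hq0' : (0:ℝ) ≤ 1 / p.toReal := by positivity
      have hrpow : ∀ {t : Set X}, μ t < γ → μ t ^ (1 / p.toReal) ≤ δ' := by
        intro t ht
        calc μ t ^ (1 / p.toReal) ≤ γ ^ (1 / p.toReal) :=
              ENNReal.rpow_le_rpow ht.le hq0'
          _ = δ' := by
              rw [hγdef, ← ENNReal.rpow_mul, mul_one_div_cancel hq0.ne', ENNReal.rpow_one]
      have hind : ∀ (t : Set X), MeasurableSet t →
          eLpNorm (t.indicator (fun _ => (1:ℝ))) p μ = μ t ^ (1 / p.toReal) := by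
        intro t ht
        rw [eLpNorm_indicator_const ht hp0 hpt]
        simp
      have h3 : eLpNorm (fun x => g0 x - s.indicator (fun _ => (1:ℝ)) x) p μ ≤ 3 * δ' := by
        have hmono' : ∀ x, ‖g0 x - s.indicator (fun _ => (1:ℝ)) x‖
            ≤ ‖W.indicator (fun _ => (1:ℝ)) x + ((V \ s').indicator (fun _ => (1:ℝ)) x
              + (s \ ball x0 n).indicator (fun _ => (1:ℝ)) x)‖ := by
          intro x
          have h4 := hcov x
          have h5 : (0:ℝ) ≤ W.indicator (fun _ => (1:ℝ)) x +
              ((V \ s').indicator (fun _ => (1:ℝ)) x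
                + (s \ ball x0 n).indicator (fun _ => (1:ℝ)) x) := by
            have := Set.indicator_nonneg (fun _ (_ : _ ∈ W) => (zero_le_one : (0:ℝ) ≤ 1)) x
            have := Set.indicator_nonneg (fun _ (_ : _ ∈ V \ s') => (zero_le_one : (0:ℝ) ≤ 1)) x
            have := Set.indicator_nonneg
              (fun _ (_ : _ ∈ s \ ball x0 n) => (zero_le_one : (0:ℝ) ≤ 1)) x
            linarith
          rw [Real.norm_eq_abs, Real.norm_eq_abs, abs_of_nonneg h5]
          exact h4
        have hm1 : AEStronglyMeasurable (W.indicator (fun _ => (1:ℝ))) μ :=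
          (measurable_const.indicator hWmeas).aestronglyMeasurable
        have hm2 : AEStronglyMeasurable ((V \ s').indicator (fun _ => (1:ℝ))) μ :=
          (measurable_const.indicator (hVmeas.diff hs'meas)).aestronglyMeasurable
        have hm3 : AEStronglyMeasurable ((s \ ball x0 n).indicator (fun _ => (1:ℝ))) μ :=
          (measurable_const.indicator (hs.diff measurableSet_ball)).aestronglyMeasurable
        calc eLpNorm (fun x => g0 x - s.indicator (fun _ => (1:ℝ)) x) p μ
            ≤ eLpNorm (fun x => W.indicator (fun _ => (1:ℝ)) x
              + ((V \ s').indicator (fun _ => (1:ℝ)) x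
                + (s \ ball x0 n).indicator (fun _ => (1:ℝ)) x)) p μ := eLpNorm_mono hmono'
          _ ≤ eLpNorm (W.indicator (fun _ => (1:ℝ))) p μ
              + eLpNorm (fun x => (V \ s').indicator (fun _ => (1:ℝ)) x
                + (s \ ball x0 n).indicator (fun _ => (1:ℝ)) x) p μ :=
              eLpNorm_add_le hm1 (hm2.add hm3) hp1
          _ ≤ eLpNorm (W.indicator (fun _ => (1:ℝ))) p μ
              + (eLpNorm ((V \ s').indicator (fun _ => (1:ℝ))) p μ
                + eLpNorm ((s \ ball x0 n).indicator (fun _ => (1:ℝ))) p μ) :=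
              add_le_add_right (eLpNorm_add_le hm2 hm3 hp1) _
          _ ≤ δ' + (δ' + δ') := by
              apply add_le_add
              · rw [hind W hWmeas]
                exact hrpow hWsmall
              · apply add_le_add
                · rw [hind _ (hVmeas.diff hs'meas)]
                  exact hrpow hVs'
                · rw [hind _ (hs.diff measurableSet_ball)]
                  exact hrpow hn
          _ = 3 * δ' := by ring
      set g : X → ℝ := fun x => c * g0 x with hgdef
      have hkey : (g - s.indicator fun _ => c)
          = fun x => c * (g0 x - s.indicator (fun _ => (1:ℝ)) x) := by
        funext x
        simp only [Pi.sub_apply, hgdef]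
        by_cases hxs : x ∈ s
        · rw [Set.indicator_of_mem hxs, Set.indicator_of_mem hxs]
          ring
        · rw [Set.indicator_of_notMem hxs, Set.indicator_of_notMem hxs]
          ring
      refine ⟨g, ?_, ‖c‖₊ * (max (1:ℝ≥0) K0), (n:ℝ), Nat.cast_nonneg n,
        avg_lip_const_mul (hLg0.weaken (le_max_right _ _)), ?_⟩
      swap
      · intro x hx
        rw [hgdef]
        simp [hsuppg0 x hx]
      · rw [hkey]
        have hsm : (fun x => c * (g0 x - s.indicator (fun _ => (1:ℝ)) x))
            = c • (fun x => g0 x - s.indicator (fun _ => (1:ℝ)) x) := rfl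
        rw [hsm, eLpNorm_const_smul]
        calc (‖c‖₊ : ℝ≥0∞) * eLpNorm (fun x => g0 x - s.indicator (fun _ => (1:ℝ)) x) p μ
            ≤ (‖c‖₊ : ℝ≥0∞) * (3 * δ') := mul_le_mul_right h3 _
          _ = (3 * ‖c‖₊) * (δ / (3 * ‖c‖₊)) := by rw [hδ'def]; ring
          _ = δ := ENNReal.mul_div_cancel (by simp [hcn0]) (ENNReal.mul_ne_top (by simp) hcnt)
  obtain ⟨g, hg1, hg2⟩ := hf.induction_dense hpt P h0P h1P h2P hε
  obtain ⟨K, R, hR, hK, hsp⟩ := hg2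
  exact ⟨g, K, R, hR, hK, hsp, hg1⟩

end AvgAux

/-- If `μ` satisfies a local comparability condition with constant `C ≥ 1`, then for
every `1 ≤ p < ∞` the averages `A_r f` converge to `f` in `L^p(μ)` as `r → 0`. -/
theorem stmt14 {X : Type*} [MetricSpace X] [MeasurableSpace X] [BorelSpace X]
    (μ : Measure X)
    (hfin : ∀ s : Set X, Bornology.IsBounded s → μ s < ⊤)
    (hpos : ∀ U : Set X, IsOpen U → U.Nonempty → 0 < μ U)
    (C : ℝ) (hC : 1 ≤ C)
    (hcomp : ∀ (x y : X) (r : ℝ), 0 < r → dist x y < r →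
      μ (closedBall x r) ≤ ENNReal.ofReal C * μ (closedBall y r)) :
    ∀ p : ℝ≥0∞, 1 ≤ p → p ≠ ⊤ → ∀ f : X → ℝ, MemLp f p μ →
      Tendsto (fun r : ℝ => eLpNorm (fun x => avgOp μ r f x - f x) p μ)
        (𝓝[>] (0 : ℝ)) (𝓝 0) := by
  intro p hp1 hpt f hf
  rcases isEmpty_or_nonempty X with hX | hX
  · have hμ0 : μ = 0 := by
      apply Measure.ext
      intro s hs
      have h1 : s = ∅ := Set.eq_empty_of_isEmpty s
      simp [h1]
    rw [hμ0]
    simp only [eLpNorm_measure_zero]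
    exact tendsto_const_nhds
  obtain ⟨x0⟩ := hX
  haveI : SecondCountableTopology X := avg_secondCountable μ hfin hpos
  haveI : SigmaFinite μ := avg_sigmaFinite hfin
  have hp0 : p ≠ 0 := by
    intro h
    rw [h] at hp1
    exact absurd hp1 (by simp)
  have hq0 : 0 < p.toReal := ENNReal.toReal_pos hp0 hpt
  rw [ENNReal.tendsto_nhds_zero]
  intro ε hε
  set KC : ℝ≥0∞ := ENNReal.ofReal C ^ (1 / p.toReal) with hKC
  have hKCt : KC ≠ ⊤ := by
    apply ENNReal.rpow_ne_top_of_nonneg (by positivity) ofReal_ne_top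
  have hε2 : (0:ℝ≥0∞) < ε / 2 := ENNReal.div_pos hε.ne' (by simp)
  set δ : ℝ≥0∞ := (ε / 2) / (KC + 1) with hδdef
  have hδ0 : δ ≠ 0 := by
    apply (ENNReal.div_pos hε2.ne' ?_).ne'
    exact ENNReal.add_ne_top.2 ⟨hKCt, by simp⟩
  obtain ⟨g, K, R, hR, hgL, hgsupp, hgclose⟩ := avg_dense hfin x0 hp1 hpt hf hδ0
  have hgM : ∀ x, |g x| ≤ |g x0| + K * R := avg_bounded_of_lip hgL hR hgsupp
  have hgint : ∀ (x : X) (r : ℝ), IntegrableOn g (closedBall x r) μ := fun x r =>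
    avg_integrableOn_of_bounded hfin hgL.continuous hgM isBounded_closedBall
  have hfint : ∀ (x : X) (r : ℝ), IntegrableOn f (closedBall x r) μ := by
    intro x r
    haveI : IsFiniteMeasure (μ.restrict (closedBall x r)) :=
      ⟨by rw [Measure.restrict_apply_univ]; exact hfin _ isBounded_closedBall⟩
    exact (hf.restrict (closedBall x r)).integrable hp1
  -- the Lipschitz term tends to zero
  have h2 : Tendsto (fun r : ℝ => ENNReal.ofReal ((K : ℝ) * r)
      * μ (closedBall x0 (R + 2)) ^ (1 / p.toReal)) (𝓝[>] (0:ℝ)) (𝓝 0) := by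
    have h2a : Tendsto (fun r : ℝ => ENNReal.ofReal ((K : ℝ) * r)) (𝓝[>] (0:ℝ)) (𝓝 0) := by
      have h2b : Tendsto (fun r : ℝ => (K : ℝ) * r) (𝓝[>] (0:ℝ)) (𝓝 0) := by
        have hcont : Continuous (fun r : ℝ => (K : ℝ) * r) := continuous_const.mul continuous_id
        have := hcont.tendsto (0:ℝ)
        simp only [mul_zero] at this
        exact this.mono_left nhdsWithin_le_nhds
      have := (ENNReal.continuous_ofReal.tendsto 0).comp h2b
      simpa only [ENNReal.ofReal_zero, Function.comp_def] using this
    have hfin2 : μ (closedBall x0 (R + 2)) ^ (1 / p.toReal) ≠ ⊤ :=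
      ENNReal.rpow_ne_top_of_nonneg (by positivity) (avg_ball_ne_top hfin x0 (R + 2))
    have h2c := ENNReal.Tendsto.mul_const h2a (Or.inr hfin2)
    simpa using h2c
  have hev1 : ∀ᶠ r in 𝓝[>] (0:ℝ), ENNReal.ofReal ((K : ℝ) * r)
      * μ (closedBall x0 (R + 2)) ^ (1 / p.toReal) ≤ ε / 2 :=
    ENNReal.tendsto_nhds_zero.1 h2 (ε / 2) hε2
  have hev2 : ∀ᶠ r in 𝓝[>] (0:ℝ), 0 < r ∧ r ≤ 1 := by
    filter_upwards [Ioo_mem_nhdsGT_of_mem (Set.left_mem_Ico.2 one_pos)] with r hrr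
    exact ⟨hrr.1, hrr.2.le⟩
  filter_upwards [hev1, hev2] with r hrnice hrr
  obtain ⟨hr0, hr1⟩ := hrr
  -- measurability of the pieces
  obtain ⟨f', hf'sm, hff'⟩ := hf.aestronglyMeasurable
  have hm1 : AEStronglyMeasurable (avgOp μ r (f - g)) μ := by
    have heq : avgOp μ r (f - g) = avgOp μ r (f' - g) :=
      avgOp_congr_ae (by filter_upwards [hff'] with x hx; simp [hx]) r
    rw [heq]
    exact (avg_stronglyMeasurable (hf'sm.sub hgL.continuous.stronglyMeasurable)
      r).aestronglyMeasurable
  have hm2 : AEStronglyMeasurable (fun x => avgOp μ r g x - g x) μ :=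
    ((avg_stronglyMeasurable hgL.continuous.stronglyMeasurable r).sub
      hgL.continuous.stronglyMeasurable).aestronglyMeasurable
  have hm3 : AEStronglyMeasurable (fun x => g x - f x) μ :=
    hgL.continuous.aestronglyMeasurable.sub hf.aestronglyMeasurable
  -- decomposition
  have hdecomp : (fun x => avgOp μ r f x - f x)
      = fun x => avgOp μ r (f - g) x + ((avgOp μ r g x - g x) + (g x - f x)) := by
    funext x
    rw [avgOp_sub x (hfint x r) (hgint x r)]
    ring
  -- the three bounds
  have hb1 : eLpNorm (avgOp μ r (f - g)) p μ ≤ KC * δ := by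
    calc eLpNorm (avgOp μ r (f - g)) p μ
        ≤ KC * eLpNorm (f - g) p μ :=
          avg_eLpNorm_le hfin hpos hC hcomp hp1 hpt hr0
            (hf.aestronglyMeasurable.sub hgL.continuous.aestronglyMeasurable)
      _ ≤ KC * δ := mul_le_mul_right hgclose _
  have hb2 : eLpNorm (fun x => avgOp μ r g x - g x) p μ ≤ ε / 2 :=
    le_trans (avg_nice hfin hpos hgL hR hgsupp hp0 hpt hr0 hr1) hrnice
  have hb3 : eLpNorm (fun x => g x - f x) p μ ≤ δ := by
    have heq : eLpNorm (fun x => g x - f x) p μ = eLpNorm (f - g) p μ := by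
      rw [← eLpNorm_neg]
      congr 1
      funext x
      simp
    rw [heq]
    exact hgclose
  calc eLpNorm (fun x => avgOp μ r f x - f x) p μ
      = eLpNorm (fun x => avgOp μ r (f - g) x
          + ((avgOp μ r g x - g x) + (g x - f x))) p μ := by rw [hdecomp]
    _ ≤ eLpNorm (avgOp μ r (f - g)) p μ
        + eLpNorm (fun x => (avgOp μ r g x - g x) + (g x - f x)) p μ :=
        eLpNorm_add_le hm1 (hm2.add hm3) hp1
    _ ≤ eLpNorm (avgOp μ r (f - g)) p μ
        + (eLpNorm (fun x => avgOp μ r g x - g x) p μ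
          + eLpNorm (fun x => g x - f x) p μ) :=
        add_le_add_right (eLpNorm_add_le hm2 hm3 hp1) _
    _ ≤ KC * δ + (ε / 2 + δ) := by
        exact add_le_add hb1 (add_le_add hb2 hb3)
    _ = (KC + 1) * δ + ε / 2 := by ring
    _ ≤ ε := by
        have hcancel : (KC + 1) * δ = ε / 2 := by
          rw [hδdef]
          exact ENNReal.mul_div_cancel (by simp) (ENNReal.add_ne_top.2 ⟨hKCt, by simp⟩)
        rw [hcancel, ENNReal.add_halves]
end
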